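/- arXiv:2604.17415 — 2 statements merged into one kernel-verified Lean document; each statement's English description precedes it below -/
import Mathlib

section
/- Let d ≥ 1, α > 0, σ > 0, κ ∈ ℝ, Ω ∈ ℝ with Ω ≠ 0, fix x ∈ ℝ^d and s_ref ∈ ℝ^d, and set μ_ref := κ x + Ω s_ref. Let V : ℝ^d → ℝ be continuously differentiable, suppose Z := ∫_{ℝ^d} exp(V(y)/α) φ_{μ_ref,σ}(y) dy is finite and positive, and define the tilted density q(y) := exp(V(y)/α) φ_{μ_ref,σ}(y) / Z. Assume that y ↦ y_j q(y), y ↦ ∂_j V(y) q(y), and y ↦ ∂_j q(y) are Lebesgue integrable for every coordinate j, and that for every j and almost every fixed choice of the remaining coordinates, q(y) → 0 as y_j → ±∞. Then the unique vector Ψ⋆ ∈ ℝ^d satisfying κ x + Ω (s_ref + Ψ⋆) = ∫_{ℝ^d} y q(y) dy is Ψ⋆ = (σ²/(α Ω)) ∫_{ℝ^d} ∇V(y) q(y) dy. (Optimal value guidance: the Gaussian kernel with mean κx + Ω(s_ref + Ψ) matches the mean of the exponentially tilted reference kernel exactly for this Ψ⋆.) -/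
/-!
The logarithmic gradient of the tilted density `q ∝ exp (V / α) φ_{μ_ref,σ}` is
`∇V / α - (y - μ_ref) / σ²`, so pointwise `(y - μ_ref) q = (σ² / α) ∇V q - σ² ∇q`.
Integration by parts against the constant function `1` shows `∫ ∇q = 0` as soon as `q` and `∇q`
are integrable, hence `∫ y q = μ_ref + (σ² / α) ∫ ∇V q` (Stein's identity for the tilted
Gaussian). Since `κ x + Ω (s_ref + Ψ) = μ_ref + Ω Ψ`, matching means amounts to
`Ω Ψ = (σ² / α) ∫ ∇V q`.
-/

open MeasureTheory Filter

/-- The density of the Gaussian `N(μ, σ²I)` on `ℝ^d`. -/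
noncomputable def gaussDensity (d : ℕ) (μ : EuclideanSpace ℝ (Fin d)) (σ : ℝ)
    (y : EuclideanSpace ℝ (Fin d)) : ℝ :=
  (2 * Real.pi * σ ^ 2) ^ (-(d : ℝ) / 2) * Real.exp (-‖y - μ‖ ^ 2 / (2 * σ ^ 2))

theorem integral_fderiv_apply_eq_zero_of_integrable {E G : Type*} [NormedAddCommGroup E]
    [NormedSpace ℝ E] [FiniteDimensional ℝ E] [MeasurableSpace E] [BorelSpace E]
    [NormedAddCommGroup G] [NormedSpace ℝ G] {μ : Measure E} [μ.IsAddHaarMeasure]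
    {f : E → G} (hf : Differentiable ℝ f) (hfi : Integrable f μ) (v : E)
    (hf'i : Integrable (fun x ↦ fderiv ℝ f x v) μ) :
    ∫ x, fderiv ℝ f x v ∂μ = 0 := by
  simpa using integral_smul_fderiv_eq_neg_fderiv_smul_of_integrable (f := fun _ ↦ (1 : ℝ))
    (g := f) (v := v) (μ := μ) (by simp) (by simpa using hf'i) (by simpa using hfi)
    (fun _ _ ↦ differentiableAt_const _) (fun x _ ↦ hf x)

theorem gradient_apply_single {d : ℕ} (f : EuclideanSpace ℝ (Fin d) → ℝ)
    (y : EuclideanSpace ℝ (Fin d)) (j : Fin d) :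
    gradient f y j = fderiv ℝ f y (EuclideanSpace.single j 1) := by
  rw [← inner_gradient_left, EuclideanSpace.inner_single_right]
  simp

theorem hasFDerivAt_gaussDensity {d : ℕ} (μ : EuclideanSpace ℝ (Fin d)) (σ : ℝ)
    (y : EuclideanSpace ℝ (Fin d)) :
    HasFDerivAt (gaussDensity d μ σ)
      ((-(gaussDensity d μ σ y / σ ^ 2)) • innerSL ℝ (y - μ)) y := by
  have h := ((((hasFDerivAt_id y).sub_const μ).norm_sq.mul_const (-(2 * σ ^ 2)⁻¹)).exp).const_mul
    ((2 * Real.pi * σ ^ 2) ^ (-(d : ℝ) / 2))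
  have hfun : gaussDensity d μ σ = fun z => (2 * Real.pi * σ ^ 2) ^ (-(d : ℝ) / 2) *
      Real.exp (‖id z - μ‖ ^ 2 * -(2 * σ ^ 2)⁻¹) := by
    funext z; simp only [gaussDensity, id, div_eq_mul_inv, mul_neg, neg_mul]
  rw [hfun]
  refine h.congr_fderiv ?_
  ext v
  simp only [id, smul_apply, ContinuousLinearMap.comp_apply,
    ContinuousLinearMap.id_apply, innerSL_apply_apply, smul_eq_mul]
  ring

noncomputable def tiltedGaussDensity (d : ℕ) (μ : EuclideanSpace ℝ (Fin d)) (σ α : ℝ)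
    (V : EuclideanSpace ℝ (Fin d) → ℝ) (Z : ℝ) (y : EuclideanSpace ℝ (Fin d)) : ℝ :=
  Real.exp (V y / α) * gaussDensity d μ σ y / Z

section Tilted

variable {d : ℕ} {μ : EuclideanSpace ℝ (Fin d)} {σ α Z : ℝ} {V : EuclideanSpace ℝ (Fin d) → ℝ}

theorem integral_tiltedGaussDensity :
    ∫ y, tiltedGaussDensity d μ σ α V Z y = (∫ y, Real.exp (V y / α) * gaussDensity d μ σ y) / Z :=
  integral_div _ _

theorem hasFDerivAt_tiltedGaussDensity {y : EuclideanSpace ℝ (Fin d)}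
    (hV : DifferentiableAt ℝ V y) :
    HasFDerivAt (tiltedGaussDensity d μ σ α V Z)
      (tiltedGaussDensity d μ σ α V Z y •
        (α⁻¹ • fderiv ℝ V y - (σ ^ 2)⁻¹ • innerSL ℝ (y - μ))) y := by
  have h := ((hV.hasFDerivAt.mul_const α⁻¹).exp.mul (hasFDerivAt_gaussDensity μ σ y)).mul_const Z⁻¹
  refine (h.congr_fderiv ?_).congr_of_eventuallyEq ?_
  · ext v
    simp only [tiltedGaussDensity, div_eq_mul_inv, map_sub, neg_smul, smul_neg, smul_add,
      add_apply, neg_apply, smul_apply, sub_apply, coe_innerSL_apply, smul_eq_mul]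
    ring
  · exact Eventually.of_forall fun z => by simp [tiltedGaussDensity, div_eq_mul_inv]

theorem fderiv_tiltedGaussDensity_apply {y : EuclideanSpace ℝ (Fin d)}
    (hV : DifferentiableAt ℝ V y) (v : EuclideanSpace ℝ (Fin d)) :
    fderiv ℝ (tiltedGaussDensity d μ σ α V Z) y v = tiltedGaussDensity d μ σ α V Z y *
      (fderiv ℝ V y v / α - inner ℝ (y - μ) v / σ ^ 2) := by
  rw [(hasFDerivAt_tiltedGaussDensity hV).fderiv]
  simp only [smul_apply, sub_apply, innerSL_apply_apply, smul_eq_mul]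
  ring

theorem integral_inner_sub_mul_tiltedGaussDensity (hσ : σ ≠ 0) (hV : Differentiable ℝ V)
    (v : EuclideanSpace ℝ (Fin d)) (hq : Integrable (tiltedGaussDensity d μ σ α V Z))
    (hVq : Integrable fun y => fderiv ℝ V y v * tiltedGaussDensity d μ σ α V Z y)
    (hq' : Integrable fun y => fderiv ℝ (tiltedGaussDensity d μ σ α V Z) y v) :
    ∫ y, inner ℝ (y - μ) v * tiltedGaussDensity d μ σ α V Z y =
      σ ^ 2 / α * ∫ y, fderiv ℝ V y v * tiltedGaussDensity d μ σ α V Z y := by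
  set q := tiltedGaussDensity d μ σ α V Z
  have hpointwise : (fun y => inner ℝ (y - μ) v * q y) =
      fun y => σ ^ 2 / α * (fderiv ℝ V y v * q y) - σ ^ 2 * fderiv ℝ q y v := by
    funext y
    rw [fderiv_tiltedGaussDensity_apply (hV y)]
    field_simp
    ring
  have hq_diff : Differentiable ℝ q := fun y =>
    (hasFDerivAt_tiltedGaussDensity (hV y)).differentiableAt
  rw [hpointwise, integral_sub (hVq.const_mul _) (hq'.const_mul _), integral_const_mul,
    integral_const_mul, integral_fderiv_apply_eq_zero_of_integrable hq_diff hq v hq', mul_zero,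
    sub_zero]

theorem integral_smul_self_tiltedGaussDensity (hσ : σ ≠ 0) (hV : Differentiable ℝ V)
    (hq : Integrable (tiltedGaussDensity d μ σ α V Z))
    (hq_one : ∫ y, tiltedGaussDensity d μ σ α V Z y = 1)
    (hyq : ∀ j, Integrable fun y : EuclideanSpace ℝ (Fin d) =>
      y j * tiltedGaussDensity d μ σ α V Z y)
    (hVq : ∀ j, Integrable fun y =>
      fderiv ℝ V y (EuclideanSpace.single j 1) * tiltedGaussDensity d μ σ α V Z y)
    (hq' : ∀ j, Integrable fun y =>
      fderiv ℝ (tiltedGaussDensity d μ σ α V Z) y (EuclideanSpace.single j 1)) :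
    ∫ y, tiltedGaussDensity d μ σ α V Z y • y =
      μ + (σ ^ 2 / α) • ∫ y, tiltedGaussDensity d μ σ α V Z y • gradient V y := by
  ext j
  have hcoord := integral_inner_sub_mul_tiltedGaussDensity hσ hV (EuclideanSpace.single j 1) hq
    (hVq j) (hq' j)
  simp only [EuclideanSpace.inner_single_right, PiLp.sub_apply, one_mul, conj_trivial,
    sub_mul] at hcoord
  rw [integral_sub (hyq j) (hq.const_mul _), integral_const_mul, hq_one, mul_one] at hcoord
  rw [PiLp.add_apply, PiLp.smul_apply, smul_eq_mul, eval_integral_piLp, eval_integral_piLp]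
  · simp only [PiLp.smul_apply, smul_eq_mul, gradient_apply_single,
      mul_comm (tiltedGaussDensity d μ σ α V Z _)]
    linarith
  · intro i
    simpa only [PiLp.smul_apply, smul_eq_mul, gradient_apply_single, mul_comm] using hVq i
  · intro i
    simpa only [PiLp.smul_apply, smul_eq_mul, mul_comm] using hyq i

theorem optimal_value_guidance_general
    (d : ℕ) (α σ κ Ω : ℝ) (hσ : 0 < σ) (hΩ : Ω ≠ 0)
    (x sref : EuclideanSpace ℝ (Fin d))
    (μref : EuclideanSpace ℝ (Fin d)) (hμref : μref = κ • x + Ω • sref)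
    (V : EuclideanSpace ℝ (Fin d) → ℝ) (hV : ContDiff ℝ 1 V)
    (Z : ℝ) (hZdef : Z = ∫ y, Real.exp (V y / α) * gaussDensity d μref σ y)
    (hZint : Integrable (fun y => Real.exp (V y / α) * gaussDensity d μref σ y))
    (hZpos : 0 < Z)
    (q : EuclideanSpace ℝ (Fin d) → ℝ)
    (hq : ∀ y, q y = Real.exp (V y / α) * gaussDensity d μref σ y / Z)
    (hint1 : ∀ j : Fin d, Integrable (fun y : EuclideanSpace ℝ (Fin d) => y j * q y))
    (hint2 : ∀ j : Fin d, Integrable (fun y : EuclideanSpace ℝ (Fin d) =>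
      fderiv ℝ V y (EuclideanSpace.single j (1 : ℝ)) * q y))
    (hint3 : ∀ j : Fin d, Integrable (fun y : EuclideanSpace ℝ (Fin d) =>
      fderiv ℝ q y (EuclideanSpace.single j (1 : ℝ)))) :
    ∀ Ψ : EuclideanSpace ℝ (Fin d),
      κ • x + Ω • (sref + Ψ) = (∫ y, q y • y) ↔
      Ψ = (σ ^ 2 / (α * Ω)) • ∫ y, q y • gradient V y := by
  obtain rfl : q = tiltedGaussDensity d μref σ α V Z := funext hq
  have hq_int : Integrable (tiltedGaussDensity d μref σ α V Z) := hZint.div_const Z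
  have hq_one : ∫ y, tiltedGaussDensity d μref σ α V Z y = 1 := by
    rw [integral_tiltedGaussDensity, ← hZdef, div_self hZpos.ne']
  intro Ψ
  rw [integral_smul_self_tiltedGaussDensity hσ.ne' (hV.differentiable one_ne_zero) hq_int hq_one
    hint1 hint2 hint3, hμref, smul_add, ← add_assoc, add_right_inj,
    show σ ^ 2 / (α * Ω) = Ω⁻¹ * (σ ^ 2 / α) by ring, mul_smul, eq_inv_smul_iff₀ hΩ]

/-- **Optimal value guidance.**
With reference mean `μ_ref = κ x + Ω s_ref` and tilted density
`q(y) = exp(V(y)/α) φ_{μ_ref,σ}(y)/Z`, the unique vector `Ψ⋆` with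
`κ x + Ω(s_ref + Ψ⋆) = ∫ y q(y) dy` is `Ψ⋆ = (σ²/(αΩ)) ∫ ∇V(y) q(y) dy`. -/
theorem optimal_value_guidance
    (d : ℕ) (hd : 1 ≤ d) (α σ κ Ω : ℝ) (hα : 0 < α) (hσ : 0 < σ) (hΩ : Ω ≠ 0)
    (x sref : EuclideanSpace ℝ (Fin d))
    (μref : EuclideanSpace ℝ (Fin d)) (hμref : μref = κ • x + Ω • sref)
    (V : EuclideanSpace ℝ (Fin d) → ℝ) (hV : ContDiff ℝ 1 V)
    (Z : ℝ) (hZdef : Z = ∫ y, Real.exp (V y / α) * gaussDensity d μref σ y)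
    (hZint : Integrable (fun y => Real.exp (V y / α) * gaussDensity d μref σ y))
    (hZpos : 0 < Z)
    (q : EuclideanSpace ℝ (Fin d) → ℝ)
    (hq : ∀ y, q y = Real.exp (V y / α) * gaussDensity d μref σ y / Z)
    (hint1 : ∀ j : Fin d, Integrable (fun y : EuclideanSpace ℝ (Fin d) => y j * q y))
    (hint2 : ∀ j : Fin d, Integrable (fun y : EuclideanSpace ℝ (Fin d) =>
      fderiv ℝ V y (EuclideanSpace.single j (1 : ℝ)) * q y))
    (hint3 : ∀ j : Fin d, Integrable (fun y : EuclideanSpace ℝ (Fin d) =>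
      fderiv ℝ q y (EuclideanSpace.single j (1 : ℝ))))
    (htail : ∀ j : Fin d, ∀ᵐ y : EuclideanSpace ℝ (Fin d),
      Tendsto (fun r : ℝ => q (WithLp.toLp 2 (Function.update y j r))) atTop (nhds 0) ∧
      Tendsto (fun r : ℝ => q (WithLp.toLp 2 (Function.update y j r))) atBot (nhds 0)) :
    ∀ Ψ : EuclideanSpace ℝ (Fin d),
      κ • x + Ω • (sref + Ψ) = (∫ y, q y • y) ↔
      Ψ = (σ ^ 2 / (α * Ω)) • ∫ y, q y • gradient V y :=
  optimal_value_guidance_general d α σ κ Ω hσ hΩ x sref μref hμref V hV Z hZdef hZint hZpos q hq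
    hint1 hint2 hint3
end Tilted
end

section
/- Let d ≥ 1, α > 0, σ > 0, κ ∈ ℝ, Ω ∈ ℝ with Ω ≠ 0, fix x ∈ ℝ^d and s_ref ∈ ℝ^d, and set μ_ref := κ x + Ω s_ref. Let V : ℝ^d → ℝ be continuously differentiable, suppose Z := ∫_{ℝ^d} exp(V(y)/α) φ_{μ_ref,σ}(y) dy is finite and positive, and define the tilted density q(y) := exp(V(y)/α) φ_{μ_ref,σ}(y) / Z, assuming the integrability and coordinatewise vanishing-at-infinity conditions: y ↦ y_j q(y), y ↦ ∂_j V(y) q(y), and y ↦ ∂_j q(y) are Lebesgue integrable for every j, and q(y) → 0 as y_j → ±∞ for almost every fixed choice of remaining coordinates. Suppose further that the value gradient admits the exact decomposition ∇V(y) = γ ∇r̂(y) + g(y) for all y ∈ ℝ^d, where γ ∈ ℝ, r̂ : ℝ^d → ℝ is differentiable and g : ℝ^d → ℝ^d. Then the residual-corrected first-order estimator Ψ̂ := (σ²/(α Ω)) ∫_{ℝ^d} (γ ∇r̂(y) + g(y)) q(y) dy exactly matches the mean of the tilted kernel: κ x + Ω (s_ref + Ψ̂) = ∫_{ℝ^d}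 y q(y) dy. (Conditional consistency of the residual-corrected first-order lookahead estimator.) -/
/-!
Up to normalisation the tilted density is `q = exp (V / α - ‖y - μref‖² / (2σ²))`, so
`∂ⱼ q = q · (∂ⱼ V / α - (yⱼ - μrefⱼ) / σ²)`. Since `q` and `∂ⱼ q` are integrable, integration by
parts against the constant `1` gives `∫ ∂ⱼ q = 0`; integrating the formula for `∂ⱼ q` turns this
into Stein's identity `∫ yⱼ q = μrefⱼ + (σ² / α) ∫ ∂ⱼ V q`. The decomposition `∇V = γ ∇r̂ + g`
identifies the last integral with the one defining `Ψ̂`, and `μref = κ x + Ω sref`.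
-/

open MeasureTheory Filter

open Real
open scoped InnerProductSpace

theorem integral_fderiv_apply_eq_zero {E : Type*} [NormedAddCommGroup E] [NormedSpace ℝ E]
    [FiniteDimensional ℝ E] [MeasurableSpace E] [BorelSpace E] {μ : Measure E}
    [μ.IsAddHaarMeasure] {f : E → ℝ} {v : E} (hf : Differentiable ℝ f)
    (hf_int : Integrable f μ) (hf'_int : Integrable (fun x ↦ fderiv ℝ f x v) μ) :
    ∫ x, fderiv ℝ f x v ∂μ = 0 := by
  simpa using (integral_mul_fderiv_eq_neg_fderiv_mul_of_integrable (g := fun _ ↦ (1 : ℝ))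
    (by simpa using hf'_int) (by simp) (by simpa using hf_int) (fun x _ ↦ hf x)
    (fun _ _ ↦ differentiableAt_const _)).symm

theorem EuclideanSpace.gradient_apply {ι : Type*} [Fintype ι] [DecidableEq ι]
    (f : EuclideanSpace ℝ ι → ℝ) (y : EuclideanSpace ℝ ι) (i : ι) :
    gradient f y i = fderiv ℝ f y (EuclideanSpace.single i 1) := by
  rw [gradient, ← InnerProductSpace.toDual_symm_apply, EuclideanSpace.inner_single_right]
  simp

section TiltedGaussian

variable {E : Type*} [NormedAddCommGroup E] [InnerProductSpace ℝ E] {V : E → ℝ} {c α σ : ℝ}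
  {m : E}

theorem fderiv_mul_exp_sub_sq_norm_apply {y : E} (hV : DifferentiableAt ℝ V y) (v : E) :
    fderiv ℝ (fun y ↦ c * exp (V y / α - ‖y - m‖ ^ 2 / (2 * σ ^ 2))) y v =
      c * exp (V y / α - ‖y - m‖ ^ 2 / (2 * σ ^ 2)) *
        (fderiv ℝ V y v / α - ⟪y - m, v⟫_ℝ / σ ^ 2) := by
  have hN : HasFDerivAt (fun y ↦ ‖y - m‖ ^ 2) (2 • innerSL ℝ (y - m)) y := by
    simpa using ((hasFDerivAt_id y).sub_const m).norm_sq
  have hW : HasFDerivAt (fun y ↦ V y / α - ‖y - m‖ ^ 2 / (2 * σ ^ 2))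
      (α⁻¹ • fderiv ℝ V y - (2 * σ ^ 2)⁻¹ • 2 • innerSL ℝ (y - m)) y := by
    simp_rw [div_eq_mul_inv]
    exact (hV.hasFDerivAt.mul_const α⁻¹).sub (hN.mul_const (2 * σ ^ 2)⁻¹)
  rw [(hW.exp.const_mul c).fderiv]
  simp [inner_sub_left]
  ring

theorem integral_inner_mul_eq_of_tilted_gaussian [FiniteDimensional ℝ E] [MeasurableSpace E]
    [BorelSpace E] {μ : Measure E} [μ.IsAddHaarMeasure] {q : E → ℝ} {v : E} (hσ : σ ≠ 0)
    (hV : Differentiable ℝ V) (hq : ∀ y, q y = c * exp (V y / α - ‖y - m‖ ^ 2 / (2 * σ ^ 2)))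
    (hq_int : Integrable q μ) (hq_one : ∫ y, q y ∂μ = 1)
    (hyq_int : Integrable (fun y ↦ ⟪y, v⟫_ℝ * q y) μ)
    (hVq_int : Integrable (fun y ↦ fderiv ℝ V y v * q y) μ)
    (hq'_int : Integrable (fun y ↦ fderiv ℝ q y v) μ) :
    ∫ y, ⟪y, v⟫_ℝ * q y ∂μ = ⟪m, v⟫_ℝ + σ ^ 2 / α * ∫ y, fderiv ℝ V y v * q y ∂μ := by
  have hq_fun : q = fun y ↦ c * exp (V y / α - ‖y - m‖ ^ 2 / (2 * σ ^ 2)) := funext hq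
  have hq_diff : Differentiable ℝ q := by
    have : Differentiable ℝ fun y : E ↦ ‖y - m‖ ^ 2 := (differentiable_id.sub_const m).norm_sq ℝ
    rw [hq_fun]
    fun_prop
  have hq' : ∀ y, fderiv ℝ q y v = α⁻¹ * (fderiv ℝ V y v * q y) -
      (σ ^ 2)⁻¹ * (⟪y, v⟫_ℝ * q y) + (σ ^ 2)⁻¹ * ⟪m, v⟫_ℝ * q y := fun y ↦ by
    rw [hq_fun, fderiv_mul_exp_sub_sq_norm_apply (hV y), inner_sub_left]
    ring
  have h0 := integral_fderiv_apply_eq_zero hq_diff hq_int hq'_int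
  simp_rw [hq'] at h0
  rw [integral_add ((hVq_int.const_mul _).sub' (hyq_int.const_mul _)) (hq_int.const_mul _),
    integral_sub (hVq_int.const_mul _) (hyq_int.const_mul _), integral_const_mul,
    integral_const_mul, integral_const_mul, hq_one] at h0
  have hσ2 : σ ^ 2 * (σ ^ 2)⁻¹ = 1 := mul_inv_cancel₀ (pow_ne_zero 2 hσ)
  linear_combination (-σ ^ 2) * h0 - (∫ y, ⟪y, v⟫_ℝ * q y ∂μ - ⟪m, v⟫_ℝ) * hσ2

end TiltedGaussian

theorem EuclideanSpace.integral_smul_self_eq_of_tilted_gaussian {ι : Type*} [Fintype ι]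
    [DecidableEq ι] [MeasurableSpace (EuclideanSpace ℝ ι)] [BorelSpace (EuclideanSpace ℝ ι)]
    {μ : Measure (EuclideanSpace ℝ ι)} [μ.IsAddHaarMeasure] {V q : EuclideanSpace ℝ ι → ℝ}
    {c α σ : ℝ} {m : EuclideanSpace ℝ ι} (hσ : σ ≠ 0) (hV : Differentiable ℝ V)
    (hq : ∀ y, q y = c * exp (V y / α - ‖y - m‖ ^ 2 / (2 * σ ^ 2)))
    (hq_int : Integrable q μ) (hq_one : ∫ y, q y ∂μ = 1)
    (hyq_int : ∀ j, Integrable (fun y ↦ y j * q y) μ)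
    (hVq_int : ∀ j, Integrable (fun y ↦ fderiv ℝ V y (single j 1) * q y) μ)
    (hq'_int : ∀ j, Integrable (fun y ↦ fderiv ℝ q y (single j 1)) μ) :
    ∫ y, q y • y ∂μ = m + (σ ^ 2 / α) • ∫ y, q y • gradient V y ∂μ := by
  have hyq_int' (j : ι) : Integrable (fun y ↦ (q y • y) j) μ := by
    simpa [mul_comm] using hyq_int j
  have hVq_int' (j : ι) : Integrable (fun y ↦ (q y • gradient V y) j) μ := by
    simpa [gradient_apply, mul_comm] using hVq_int j
  ext j
  simp only [PiLp.add_apply, PiLp.smul_apply, smul_eq_mul, eval_integral_piLp hyq_int',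
    eval_integral_piLp hVq_int', gradient_apply, mul_comm (q _)]
  simpa [inner_single_right] using
    integral_inner_mul_eq_of_tilted_gaussian (v := single j 1) hσ hV hq hq_int hq_one
      (by simpa [inner_single_right] using hyq_int j) (hVq_int j) (hq'_int j)

theorem residual_first_order_consistency_general
    (d : ℕ) (α σ κ Ω : ℝ) (hσ : 0 < σ) (hΩ : Ω ≠ 0)
    (x sref : EuclideanSpace ℝ (Fin d))
    (μref : EuclideanSpace ℝ (Fin d)) (hμref : μref = κ • x + Ω • sref)
    (V : EuclideanSpace ℝ (Fin d) → ℝ) (hV : ContDiff ℝ 1 V)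
    (Z : ℝ) (hZdef : Z = ∫ y, Real.exp (V y / α) * gaussDensity d μref σ y)
    (hZint : Integrable (fun y => Real.exp (V y / α) * gaussDensity d μref σ y))
    (hZpos : 0 < Z)
    (q : EuclideanSpace ℝ (Fin d) → ℝ)
    (hq : ∀ y, q y = Real.exp (V y / α) * gaussDensity d μref σ y / Z)
    (hint1 : ∀ j : Fin d, Integrable (fun y : EuclideanSpace ℝ (Fin d) => y j * q y))
    (hint2 : ∀ j : Fin d, Integrable (fun y : EuclideanSpace ℝ (Fin d) =>
      fderiv ℝ V y (EuclideanSpace.single j (1 : ℝ)) * q y))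
    (hint3 : ∀ j : Fin d, Integrable (fun y : EuclideanSpace ℝ (Fin d) =>
      fderiv ℝ q y (EuclideanSpace.single j (1 : ℝ))))
    (γ : ℝ) (rhat : EuclideanSpace ℝ (Fin d) → ℝ)
    (g : EuclideanSpace ℝ (Fin d) → EuclideanSpace ℝ (Fin d))
    (hdecomp : ∀ y, gradient V y = γ • gradient rhat y + g y)
    (Ψhat : EuclideanSpace ℝ (Fin d))
    (hΨ : Ψhat = (σ ^ 2 / (α * Ω)) • ∫ y, q y • (γ • gradient rhat y + g y)) :
    κ • x + Ω • (sref + Ψhat) = ∫ y, q y • y := by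
  obtain ⟨c, hc⟩ : ∃ c, ∀ y, gaussDensity d μref σ y = c * exp (-(‖y - μref‖ ^ 2 / (2 * σ ^ 2))) :=
    ⟨_, fun y ↦ by rw [gaussDensity, neg_div (2 * σ ^ 2)]⟩
  have hq_tilted (y) : q y = c / Z * exp (V y / α - ‖y - μref‖ ^ 2 / (2 * σ ^ 2)) := by
    rw [hq, hc, sub_eq_add_neg (V y / α), exp_add]
    ring
  have hq_int : Integrable q := by
    simpa only [← hq] using hZint.div_const Z
  have hq_one : ∫ y, q y = 1 := by
    simp_rw [hq, integral_div, ← hZdef, div_self hZpos.ne']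
  have hΩσ : Ω * (σ ^ 2 / (α * Ω)) = σ ^ 2 / α := by
    rw [mul_div_assoc', mul_comm α, mul_div_mul_left _ _ hΩ]
  simp_rw [← hdecomp] at hΨ
  rw [EuclideanSpace.integral_smul_self_eq_of_tilted_gaussian hσ.ne'
    (hV.differentiable one_ne_zero) hq_tilted hq_int hq_one hint1 hint2 hint3,
    hΨ, hμref, smul_add, smul_smul, hΩσ]
  abel

/-- **Conditional consistency of the residual-corrected first-order lookahead estimator.**
If the value gradient decomposes exactly as `∇V = γ ∇r̂ + g`, then the residual-corrected
estimator `Ψ̂ = (σ²/(αΩ)) ∫ (γ∇r̂(y) + g(y)) q(y) dy` exactly matches the mean of the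
tilted kernel: `κ x + Ω(s_ref + Ψ̂) = ∫ y q(y) dy`. -/
theorem residual_first_order_consistency
    (d : ℕ) (hd : 1 ≤ d) (α σ κ Ω : ℝ) (hα : 0 < α) (hσ : 0 < σ) (hΩ : Ω ≠ 0)
    (x sref : EuclideanSpace ℝ (Fin d))
    (μref : EuclideanSpace ℝ (Fin d)) (hμref : μref = κ • x + Ω • sref)
    (V : EuclideanSpace ℝ (Fin d) → ℝ) (hV : ContDiff ℝ 1 V)
    (Z : ℝ) (hZdef : Z = ∫ y, Real.exp (V y / α) * gaussDensity d μref σ y)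
    (hZint : Integrable (fun y => Real.exp (V y / α) * gaussDensity d μref σ y))
    (hZpos : 0 < Z)
    (q : EuclideanSpace ℝ (Fin d) → ℝ)
    (hq : ∀ y, q y = Real.exp (V y / α) * gaussDensity d μref σ y / Z)
    (hint1 : ∀ j : Fin d, Integrable (fun y : EuclideanSpace ℝ (Fin d) => y j * q y))
    (hint2 : ∀ j : Fin d, Integrable (fun y : EuclideanSpace ℝ (Fin d) =>
      fderiv ℝ V y (EuclideanSpace.single j (1 : ℝ)) * q y))
    (hint3 : ∀ j : Fin d, Integrable (fun y : EuclideanSpace ℝ (Fin d) =>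
      fderiv ℝ q y (EuclideanSpace.single j (1 : ℝ))))
    (htail : ∀ j : Fin d, ∀ᵐ y : EuclideanSpace ℝ (Fin d),
      Tendsto (fun r : ℝ => q (WithLp.toLp 2 (Function.update y j r))) atTop (nhds 0) ∧
      Tendsto (fun r : ℝ => q (WithLp.toLp 2 (Function.update y j r))) atBot (nhds 0))
    (γ : ℝ) (rhat : EuclideanSpace ℝ (Fin d) → ℝ) (hrhat : Differentiable ℝ rhat)
    (g : EuclideanSpace ℝ (Fin d) → EuclideanSpace ℝ (Fin d))
    (hdecomp : ∀ y, gradient V y = γ • gradient rhat y + g y)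
    (Ψhat : EuclideanSpace ℝ (Fin d))
    (hΨ : Ψhat = (σ ^ 2 / (α * Ω)) • ∫ y, q y • (γ • gradient rhat y + g y)) :
    κ • x + Ω • (sref + Ψhat) = ∫ y, q y • y :=
  residual_first_order_consistency_general d α σ κ Ω hσ hΩ x sref μref hμref V hV Z hZdef hZint
    hZpos q hq hint1 hint2 hint3 γ rhat g hdecomp Ψhat hΨ
end
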